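/- arXiv:2003.02566 — 4 statements merged into one kernel-verified Lean document; each statement's English description precedes it below -/
import Mathlib

section
/- Fix τ > 0 and suppose H' = H but θ' ≠ θ. Then with Z_t = t^h X_{t^{θ/θ'}} (h = H(1 - θ/θ')), one has E[(Z_τ - Z_0)²] = σ²τ^{2H} while lim_{t→∞} E[(Z_{t+τ} - Z_t)²] = σ²(θτ/θ')^{2H}, and these two values differ. Hence Z does not have stationary increments. -/
open MeasureTheory Real Filter Topology

/-! With `α = θ / θ'` and `h = H (1 - α)`, the covariance of `X` gives, for `0 < t < u`,
`E[(Z_u - Z_t)²] = σ² ((u^h - t^h) (u^{H(1+α)} - t^{H(1+α)}) + (u t)^h (u^α - t^α)^{2H})`.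
For `u = t + τ` each difference `u^r - t^r` behaves like `r τ t^{r-1}`, so the first product is
of order `t^{2H-2} → 0` while the second term tends to `(α τ)^{2H}`. At `t = 0` the increment is
`Z_τ` itself, of variance `σ² τ^{2H}`, and the two values differ because `α ≠ 1`. -/

lemma Real.abs_sub_rpow_lt_rpow_add_rpow {a b p : ℝ} (ha : 0 < a) (hb : 0 < b) (hp : 0 < p) :
    |a - b| ^ p < a ^ p + b ^ p := by
  have hlt : |a - b| < max a b := abs_sub_lt_iff.mpr
    ⟨by linarith [le_max_left a b], by linarith [le_max_right a b]⟩
  calc |a - b| ^ p < max a b ^ p := rpow_lt_rpow (abs_nonneg _) hlt hp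
    _ ≤ a ^ p + b ^ p := by
      rcases max_choice a b with h | h <;> rw [h]
      · linarith [rpow_pos_of_pos hb p]
      · linarith [rpow_pos_of_pos ha p]

lemma tendsto_rpow_one_sub_mul_add_rpow_sub_rpow_atTop {τ : ℝ} (hτ : τ ≠ 0) (r : ℝ) :
    Tendsto (fun t : ℝ => t ^ (1 - r) * ((t + τ) ^ r - t ^ r)) atTop (𝓝 (r * τ)) := by
  have hslope : Tendsto (fun y : ℝ => y⁻¹ * ((1 + y) ^ r - 1)) (𝓝[≠] 0) (𝓝 r) := by
    have := hasDerivAt_iff_tendsto_slope_zero.mp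
      (by simpa using hasDerivAt_rpow_const (x := 1) (p := r) (Or.inl one_ne_zero))
    simpa only [smul_eq_mul, one_rpow] using this
  have hτt : Tendsto (fun t : ℝ => τ / t) atTop (𝓝[≠] 0) :=
    tendsto_nhdsWithin_iff.mpr ⟨tendsto_const_nhds.div_atTop tendsto_id,
      (eventually_gt_atTop 0).mono fun t ht => div_ne_zero hτ ht.ne'⟩
  rw [mul_comm]
  refine ((hslope.comp hτt).const_mul τ).congr' ?_
  filter_upwards [eventually_gt_atTop 0, eventually_gt_atTop (-τ)] with t ht htτ
  have htr : t ^ r ≠ 0 := (rpow_pos_of_pos ht r).ne'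
  have h1 : 1 + τ / t = (t + τ) / t := by field_simp
  rw [Function.comp_apply, h1, div_rpow (by linarith) ht.le, rpow_sub ht, rpow_one]
  field_simp

lemma tendsto_add_rpow_sub_rpow_mul_add_rpow_sub_rpow_atTop {τ p q : ℝ} (hτ : τ ≠ 0)
    (hpq : p + q < 2) :
    Tendsto (fun t : ℝ => ((t + τ) ^ p - t ^ p) * ((t + τ) ^ q - t ^ q)) atTop (𝓝 0) := by
  have hdecay : Tendsto (fun t : ℝ => t ^ (p + q - 2)) atTop (𝓝 0) := by
    simpa using tendsto_rpow_neg_atTop (y := 2 - (p + q)) (by linarith)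
  have := (hdecay.mul (tendsto_rpow_one_sub_mul_add_rpow_sub_rpow_atTop hτ p)).mul
    (tendsto_rpow_one_sub_mul_add_rpow_sub_rpow_atTop hτ q)
  rw [zero_mul, zero_mul] at this
  refine this.congr' ?_
  filter_upwards [eventually_gt_atTop 0] with t ht
  have hone : t ^ (p + q - 2) * t ^ (1 - p) * t ^ (1 - q) = 1 := by
    rw [← rpow_add ht, ← rpow_add ht, show p + q - 2 + (1 - p) + (1 - q) = 0 by ring, rpow_zero]
  linear_combination (((t + τ) ^ p - t ^ p) * ((t + τ) ^ q - t ^ q)) * hone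

lemma tendsto_rpow_mul_rpow_mul_abs_add_rpow_sub_rpow_atTop {τ H : ℝ} (hτ : τ ≠ 0)
    (hH : 0 ≤ H) (α : ℝ) :
    Tendsto (fun t : ℝ => (t + τ) ^ (H * (1 - α)) * t ^ (H * (1 - α)) *
      |(t + τ) ^ α - t ^ α| ^ (2 * H)) atTop (𝓝 (|α * τ| ^ (2 * H))) := by
  have hratio : Tendsto (fun t : ℝ => ((t + τ) / t) ^ (H * (1 - α))) atTop (𝓝 1) := by
    have h : Tendsto (fun t : ℝ => 1 + τ / t) atTop (𝓝 1) := by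
      simpa using tendsto_const_nhds.add (tendsto_const_nhds.div_atTop (tendsto_id (α := ℝ)))
    have := (continuousAt_rpow_const 1 (H * (1 - α)) (Or.inl one_ne_zero)).tendsto.comp h
    rw [one_rpow] at this
    refine this.congr' ?_
    filter_upwards [eventually_gt_atTop 0] with t ht
    simp only [Function.comp_apply]
    field_simp
  have hincr := ((continuous_abs.tendsto _).comp
    (tendsto_rpow_one_sub_mul_add_rpow_sub_rpow_atTop hτ α)).rpow_const (p := 2 * H)
    (Or.inr (by positivity))
  have := hratio.mul hincr
  rw [one_mul] at this
  refine this.congr' ?_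
  filter_upwards [eventually_gt_atTop 0, eventually_gt_atTop (-τ)] with t ht htτ
  simp only [Function.comp_apply]
  rw [abs_mul, mul_rpow (abs_nonneg _) (abs_nonneg _), abs_of_pos (rpow_pos_of_pos ht _),
    ← rpow_mul ht.le, div_rpow (by linarith) ht.le]
  have : t ^ ((1 - α) * (2 * H)) = t ^ (H * (1 - α)) * t ^ (H * (1 - α)) := by
    rw [← rpow_add ht]; ring_nf
  rw [this]
  field_simp [(rpow_pos_of_pos ht (H * (1 - α))).ne']

section

variable {Ω : Type*} [MeasurableSpace Ω]

lemma integral_mul_sub_mul_sq {P : Measure Ω} {f g : Ω → ℝ}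
    (hff : Integrable (fun ω => f ω * f ω) P) (hfg : Integrable (fun ω => f ω * g ω) P)
    (hgg : Integrable (fun ω => g ω * g ω) P) (c d : ℝ) :
    ∫ ω, (c * f ω - d * g ω) ^ 2 ∂P =
      c ^ 2 * ∫ ω, f ω * f ω ∂P - 2 * c * d * ∫ ω, f ω * g ω ∂P + d ^ 2 * ∫ ω, g ω * g ω ∂P := by
  have hexpand : (fun ω => (c * f ω - d * g ω) ^ 2) = fun ω =>
      c ^ 2 * (f ω * f ω) - 2 * c * d * (f ω * g ω) + d ^ 2 * (g ω * g ω) := by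
    ext ω; ring
  have hsub : Integrable (fun ω => c ^ 2 * (f ω * f ω) - 2 * c * d * (f ω * g ω)) P :=
    (hff.const_mul _).sub (hfg.const_mul _)
  rw [hexpand, integral_add hsub (hgg.const_mul _),
    integral_sub (hff.const_mul _) (hfg.const_mul _), integral_const_mul, integral_const_mul,
    integral_const_mul]

def HasFBMCovariance (P : Measure Ω) (X : ℝ → Ω → ℝ) (σ H : ℝ) : Prop :=
  ∀ s t : ℝ, ∫ ω, X t ω * X s ω ∂P =
    σ ^ 2 / 2 * (|t| ^ (2 * H) + |s| ^ (2 * H) - |t - s| ^ (2 * H))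

namespace HasFBMCovariance

variable {P : Measure Ω} {X : ℝ → Ω → ℝ} {σ H : ℝ}

lemma integral_mul_self (hX : HasFBMCovariance P X σ H) (hH : H ≠ 0) (a : ℝ) :
    ∫ ω, X a ω * X a ω ∂P = σ ^ 2 * |a| ^ (2 * H) := by
  rw [hX, sub_self, abs_zero, zero_rpow (mul_ne_zero two_ne_zero hH)]
  ring

lemma integral_const_mul_sq (hX : HasFBMCovariance P X σ H) (hH : H ≠ 0) (c a : ℝ) :
    ∫ ω, (c * X a ω) ^ 2 ∂P = σ ^ 2 * c ^ 2 * |a| ^ (2 * H) := by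
  simp_rw [mul_pow, sq (X a _)]
  rw [integral_const_mul, hX.integral_mul_self hH]
  ring

/-- The covariance of `X a` and `X b` is nonzero, and a non-integrable function has Bochner
integral `0`. -/
lemma integrable_mul (hX : HasFBMCovariance P X σ H) (hσ : σ ≠ 0) (hH : 0 < H) {a b : ℝ}
    (ha : 0 < a) (hb : 0 < b) : Integrable (fun ω => X a ω * X b ω) P := by
  refine Integrable.of_integral_ne_zero (ne_of_gt ?_)
  rw [hX, abs_of_pos ha, abs_of_pos hb]
  have := abs_sub_rpow_lt_rpow_add_rpow ha hb (by positivity : 0 < 2 * H)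
  exact mul_pos (by positivity) (by linarith)

lemma integral_mul_sub_mul_sq (hX : HasFBMCovariance P X σ H) (hσ : σ ≠ 0) (hH : 0 < H)
    {a b : ℝ} (ha : 0 < a) (hb : 0 < b) (c d : ℝ) :
    ∫ ω, (c * X a ω - d * X b ω) ^ 2 ∂P =
      σ ^ 2 * ((c - d) * (c * a ^ (2 * H) - d * b ^ (2 * H)) + c * d * |a - b| ^ (2 * H)) := by
  rw [_root_.integral_mul_sub_mul_sq (hX.integrable_mul hσ hH ha ha)
    (hX.integrable_mul hσ hH ha hb) (hX.integrable_mul hσ hH hb hb),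
    hX.integral_mul_self hH.ne', hX.integral_mul_self hH.ne', hX, abs_of_pos ha, abs_of_pos hb,
    abs_sub_comm]
  ring

lemma integral_rpow_mul_sub_rpow_mul_sq (hX : HasFBMCovariance P X σ H) (hσ : σ ≠ 0)
    (hH : 0 < H) (α : ℝ) {t u : ℝ} (ht : 0 < t) (hu : 0 < u) :
    ∫ ω, (u ^ (H * (1 - α)) * X (u ^ α) ω - t ^ (H * (1 - α)) * X (t ^ α) ω) ^ 2 ∂P =
      σ ^ 2 * ((u ^ (H * (1 - α)) - t ^ (H * (1 - α))) * (u ^ (H * (1 + α)) - t ^ (H * (1 + α)))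
        + u ^ (H * (1 - α)) * t ^ (H * (1 - α)) * |u ^ α - t ^ α| ^ (2 * H)) := by
  have hexp {x : ℝ} (hx : 0 < x) : x ^ (H * (1 - α)) * (x ^ α) ^ (2 * H) = x ^ (H * (1 + α)) := by
    rw [← rpow_mul hx.le, ← rpow_add hx]; ring_nf
  rw [hX.integral_mul_sub_mul_sq hσ hH (rpow_pos_of_pos hu α) (rpow_pos_of_pos ht α), hexp hu,
    hexp ht]

end HasFBMCovariance

end

theorem stmt7_general {Ω : Type*} [MeasurableSpace Ω] (P : Measure Ω)
    (X Z : ℝ → Ω → ℝ) (H σ θ θ' : ℝ)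
    (hH : H ∈ Set.Ioo (0:ℝ) 1) (hσ : 0 < σ) (hθ : 0 < θ) (hθ' : 0 < θ')
    (hne : θ ≠ θ')
    (hcov : ∀ s t : ℝ, ∫ ω, X t ω * X s ω ∂P =
      σ ^ 2 / 2 * (|t| ^ (2 * H) + |s| ^ (2 * H) - |t - s| ^ (2 * H)))
    (hZ : ∀ t : ℝ, 0 < t → ∀ ω,
      Z t ω = t ^ (H * (1 - θ / θ')) * X (t ^ (θ / θ')) ω)
    (hZ0 : ∀ ω, Z 0 ω = 0)
    (τ : ℝ) (hτ : 0 < τ) :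
    (∫ ω, (Z τ ω - Z 0 ω) ^ 2 ∂P = σ ^ 2 * τ ^ (2 * H)) ∧
    Tendsto (fun t : ℝ => ∫ ω, (Z (t + τ) ω - Z t ω) ^ 2 ∂P) atTop
      (nhds (σ ^ 2 * (θ * τ / θ') ^ (2 * H))) ∧
    σ ^ 2 * τ ^ (2 * H) ≠ σ ^ 2 * (θ * τ / θ') ^ (2 * H) := by
  obtain ⟨hH0, hH1⟩ := hH
  have hX : HasFBMCovariance P X σ H := hcov
  set α := θ / θ'
  refine ⟨?_, ?_, ?_⟩
  · simp only [hZ0, hZ τ hτ, sub_zero]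
    rw [hX.integral_const_mul_sq hH0.ne', abs_of_pos (rpow_pos_of_pos hτ α), ← rpow_mul hτ.le]
    have hexp : (τ ^ (H * (1 - α))) ^ 2 * τ ^ (α * (2 * H)) = τ ^ (2 * H) := by
      rw [← rpow_natCast, ← rpow_mul hτ.le, ← rpow_add hτ]
      ring_nf
    linear_combination σ ^ 2 * hexp
  · have hlim := ((tendsto_add_rpow_sub_rpow_mul_add_rpow_sub_rpow_atTop hτ.ne'
      (p := H * (1 - α)) (q := H * (1 + α)) (by linarith)).add
      (tendsto_rpow_mul_rpow_mul_abs_add_rpow_sub_rpow_atTop hτ.ne' hH0.le α)).const_mul (σ ^ 2)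
    rw [zero_add, abs_of_pos (by positivity), show α * τ = θ * τ / θ' by ring] at hlim
    refine hlim.congr' ?_
    filter_upwards [eventually_gt_atTop 0] with t ht
    have htτ : 0 < t + τ := by linarith
    simp only [hZ t ht, hZ (t + τ) htτ]
    rw [hX.integral_rpow_mul_sub_rpow_mul_sq hσ.ne' hH0 α ht htτ]
  · rw [Ne, mul_right_inj' (by positivity), rpow_left_inj hτ.le (by positivity) (by positivity),
      eq_div_iff hθ'.ne']
    intro h
    exact hne (mul_right_cancel₀ hτ.ne' (by linarith)).symm

theorem stmt7 {Ω : Type*} [MeasurableSpace Ω] (P : Measure Ω) [IsProbabilityMeasure P]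
    (X Z : ℝ → Ω → ℝ) (H σ θ θ' : ℝ)
    (hH : H ∈ Set.Ioo (0:ℝ) 1) (hσ : 0 < σ) (hθ : 0 < θ) (hθ' : 0 < θ')
    (hne : θ ≠ θ')
    (hcov : ∀ s t : ℝ, ∫ ω, X t ω * X s ω ∂P =
      σ ^ 2 / 2 * (|t| ^ (2 * H) + |s| ^ (2 * H) - |t - s| ^ (2 * H)))
    (hZ : ∀ t : ℝ, 0 < t → ∀ ω,
      Z t ω = t ^ (H * (1 - θ / θ')) * X (t ^ (θ / θ')) ω)
    (hZ0 : ∀ ω, Z 0 ω = 0)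
    (τ : ℝ) (hτ : 0 < τ) :
    (∫ ω, (Z τ ω - Z 0 ω) ^ 2 ∂P = σ ^ 2 * τ ^ (2 * H)) ∧
    Tendsto (fun t : ℝ => ∫ ω, (Z (t + τ) ω - Z t ω) ^ 2 ∂P) atTop
      (nhds (σ ^ 2 * (θ * τ / θ') ^ (2 * H))) ∧
    σ ^ 2 * τ ^ (2 * H) ≠ σ ^ 2 * (θ * τ / θ') ^ (2 * H) :=
  stmt7_general P X Z H σ θ θ' hH hσ hθ hθ' hne hcov hZ hZ0 τ hτ
end

section
/- For fixed τ > 0, with Z_t = t^h X_{t^{θ/θ'}} and h = H' - (θ/θ')H, the asymptotic equivalence E[(Z_{t+τ} - Z_t)²] ~ σ² t^{2H'} (θτ/(θ' t))^{2H} holds as t → +∞; i.e. the ratio of the two sides tends to 1. -/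
open MeasureTheory Real Filter Topology

/-! With `s = t + τ` and `α = θ / θ'`, bilinearity and the covariance of `X` give
`E[(Z_s - Z_t)²] = σ² [(st)^h |s^α - t^α|^{2H} + (s^{H'} - t^{H'})² - (st)^h (s^{αH} - t^{αH})²]`.
This is homogeneous of degree `2H'` in `(s, t)`, so after dividing by `σ² t^{2H'} (ατ/t)^{2H}`
only a function of `p = s/t → 1⁺` is left. Its first term tends to `1` because
`(p^α - 1) / (α (p - 1)) → 1`; the other two are `O((p - 1)²) = o((p - 1)^{2H})` as `H < 1`. -/

noncomputable def fbmCov (σ H s t : ℝ) : ℝ :=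
  σ ^ 2 / 2 * (|t| ^ (2 * H) + |s| ^ (2 * H) - |t - s| ^ (2 * H))

section fbmCov

variable {σ H : ℝ}

lemma fbmCov_comm (s t : ℝ) : fbmCov σ H s t = fbmCov σ H t s := by
  simp only [fbmCov, abs_sub_comm s t]; ring

lemma fbmCov_self (hH : H ≠ 0) (t : ℝ) : fbmCov σ H t t = σ ^ 2 * |t| ^ (2 * H) := by
  simp only [fbmCov, sub_self, abs_zero, zero_rpow (mul_ne_zero two_ne_zero hH)]; ring

lemma fbmCov_pos (hσ : σ ≠ 0) (hH : 0 < H) {s t : ℝ} (hs : 0 < s) (ht : 0 < t) :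
    0 < fbmCov σ H s t := by
  wlog hst : s ≤ t generalizing s t
  · rw [fbmCov_comm]; exact this ht hs (le_of_not_ge hst)
  have hlt : |t - s| ^ (2 * H) < |t| ^ (2 * H) := by
    rw [abs_of_nonneg (sub_nonneg.2 hst), abs_of_pos ht]
    exact rpow_lt_rpow (sub_nonneg.2 hst) (by linarith) (by positivity)
  have : 0 < |s| ^ (2 * H) := rpow_pos_of_pos (abs_pos.2 hs.ne') _
  unfold fbmCov
  exact mul_pos (by positivity) (by linarith)

end fbmCov

/-- `E[(Z_s - Z_t)²] / σ²` for `Z_t = t^h X_{t^α}`, see `integral_sq_sub_of_rpow_timeChange`. -/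
noncomputable def incrementVariance (h α H s t : ℝ) : ℝ :=
  (s * t) ^ h * |s ^ α - t ^ α| ^ (2 * H) + (s ^ (h + α * H) - t ^ (h + α * H)) ^ 2
    - (s * t) ^ h * (s ^ (α * H) - t ^ (α * H)) ^ 2

lemma incrementVariance_mul (h α H : ℝ) {c s t : ℝ} (hc : 0 < c) (hs : 0 < s) (ht : 0 < t) :
    incrementVariance h α H (c * s) (c * t) =
      c ^ (2 * (h + α * H)) * incrementVariance h α H s t := by
  have hpow : ∀ {z : ℝ}, 0 < z → ∀ q : ℝ, (c * z) ^ q = c ^ q * z ^ q :=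
    fun hz q => mul_rpow hc.le hz.le
  have hcα : (c ^ α) ^ (2 * H) = (c ^ (α * H)) ^ 2 := by
    rw [← rpow_mul hc.le, ← rpow_two, ← rpow_mul hc.le]; ring_nf
  have hc2 : c ^ (2 * (h + α * H)) = (c ^ h * c ^ (α * H)) ^ 2 := by
    rw [← rpow_add hc, ← rpow_two, ← rpow_mul hc.le]; ring_nf
  have habs : |c ^ α * s ^ α - c ^ α * t ^ α| ^ (2 * H) =
      (c ^ α) ^ (2 * H) * |s ^ α - t ^ α| ^ (2 * H) := by
    rw [← mul_sub, abs_mul, abs_of_pos (rpow_pos_of_pos hc α),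
      mul_rpow (rpow_nonneg hc.le α) (abs_nonneg _)]
  unfold incrementVariance
  rw [show c * s * (c * t) = c * (c * (s * t)) by ring, hpow (by positivity),
    hpow (by positivity), hpow hs, hpow ht, hpow hs, hpow ht, hpow hs, hpow ht, habs, hcα, hc2,
    rpow_add hc]
  ring

section Covariance

variable {Ω : Type*} [MeasurableSpace Ω] {P : Measure Ω} {X : ℝ → Ω → ℝ} {σ H : ℝ}

theorem integral_sq_sub_of_fbmCov (hcov : ∀ s t, ∫ ω, X t ω * X s ω ∂P = fbmCov σ H s t)
    (hσ : σ ≠ 0) (hH : 0 < H) (a c : ℝ) {x y : ℝ} (hx : 0 < x) (hy : 0 < y) :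
    ∫ ω, (a * X x ω - c * X y ω) ^ 2 ∂P =
      σ ^ 2 * (a * c * |x - y| ^ (2 * H) + (a * x ^ H - c * y ^ H) ^ 2
        - a * c * (x ^ H - y ^ H) ^ 2) := by
  -- No integrability is assumed: it comes from the covariances being nonzero, since the
  -- Bochner integral of a non-integrable function is 0.
  have hint : ∀ {s t}, 0 < s → 0 < t → Integrable (fun ω => X t ω * X s ω) P :=
    fun hs ht => .of_integral_ne_zero (by rw [hcov]; exact (fbmCov_pos hσ hH hs ht).ne')
  have hsq : ∀ {z : ℝ}, 0 < z → |z| ^ (2 * H) = (z ^ H) ^ 2 := fun hz => by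
    rw [abs_of_pos hz, mul_comm, rpow_mul hz.le, rpow_two]
  have hexp : ∀ ω, (a * X x ω - c * X y ω) ^ 2 =
      a ^ 2 * (X x ω * X x ω) - 2 * a * c * (X x ω * X y ω) + c ^ 2 * (X y ω * X y ω) :=
    fun ω => by ring
  have hxx := (hint hx hx).const_mul (a ^ 2)
  have hxy := (hint hy hx).const_mul (2 * a * c)
  have hyy := (hint hy hy).const_mul (c ^ 2)
  simp only [hexp]
  rw [integral_add (by exact hxx.sub hxy) hyy, integral_sub hxx hxy,
    integral_const_mul, integral_const_mul, integral_const_mul, hcov, hcov, hcov,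
    fbmCov_self hH.ne', fbmCov_self hH.ne', fbmCov, hsq hx, hsq hy]
  ring

theorem integral_sq_sub_of_rpow_timeChange (hcov : ∀ s t, ∫ ω, X t ω * X s ω ∂P = fbmCov σ H s t)
    (hσ : σ ≠ 0) (hH : 0 < H) {Z : ℝ → Ω → ℝ} {h α : ℝ}
    (hZ : ∀ t, 0 < t → ∀ ω, Z t ω = t ^ h * X (t ^ α) ω) {s t : ℝ} (hs : 0 < s) (ht : 0 < t) :
    ∫ ω, (Z s ω - Z t ω) ^ 2 ∂P = σ ^ 2 * incrementVariance h α H s t := by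
  simp only [hZ s hs, hZ t ht]
  rw [integral_sq_sub_of_fbmCov hcov hσ hH _ _ (rpow_pos_of_pos hs α) (rpow_pos_of_pos ht α),
    incrementVariance, mul_rpow hs.le ht.le, ← rpow_mul hs.le, ← rpow_mul ht.le, rpow_add hs,
    rpow_add ht]

end Covariance

section Asymptotics

lemma tendsto_rpow_sub_one_div_sub_one (q : ℝ) :
    Tendsto (fun p : ℝ => (p ^ q - 1) / (p - 1)) (𝓝[>] 1) (𝓝 q) := by
  have hderiv : HasDerivAt (fun p : ℝ => p ^ q) q 1 := by
    simpa using hasDerivAt_rpow_const (x := 1) (p := q) (Or.inl one_ne_zero)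
  refine ((hasDerivAt_iff_tendsto_slope.mp hderiv).mono_left
    (nhdsWithin_mono _ fun p hp => ne_of_gt hp)).congr fun p => ?_
  rw [slope_def_field, one_rpow]

lemma tendsto_sub_one_rpow_nhdsGT_one {r : ℝ} (hr : 0 < r) :
    Tendsto (fun p : ℝ => (p - 1) ^ r) (𝓝[>] 1) (𝓝 0) := by
  have hcont : Continuous (fun p : ℝ => (p - 1) ^ r) :=
    (continuous_rpow_const hr.le).comp (continuous_sub_right 1)
  simpa [zero_rpow hr.ne'] using (hcont.tendsto 1).mono_left nhdsWithin_le_nhds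

variable {H α : ℝ}

lemma tendsto_sq_rpow_sub_one_div_rpow (hH : H < 1) (hα : 0 < α) (q : ℝ) :
    Tendsto (fun p : ℝ => (p ^ q - 1) ^ 2 / (α * (p - 1)) ^ (2 * H)) (𝓝[>] 1) (𝓝 0) := by
  have hlim := (((tendsto_rpow_sub_one_div_sub_one q).pow 2).mul
    (tendsto_sub_one_rpow_nhdsGT_one (r := 2 - 2 * H) (by linarith))).div_const (α ^ (2 * H))
  rw [mul_zero, zero_div] at hlim
  refine hlim.congr' ?_
  filter_upwards [self_mem_nhdsWithin] with p (hp : 1 < p)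
  have hp1 : 0 < p - 1 := sub_pos.2 hp
  rw [mul_rpow hα.le hp1.le, rpow_sub hp1, rpow_two]
  have : (p - 1) ^ (2 * H) ≠ 0 := (rpow_pos_of_pos hp1 _).ne'
  have : α ^ (2 * H) ≠ 0 := (rpow_pos_of_pos hα _).ne'
  field_simp

lemma tendsto_abs_rpow_sub_one_div_rpow (hH : 0 < H) (hα : 0 < α) :
    Tendsto (fun p : ℝ => |p ^ α - 1| ^ (2 * H) / (α * (p - 1)) ^ (2 * H)) (𝓝[>] 1) (𝓝 1) := by
  have hlim := (((tendsto_rpow_sub_one_div_sub_one α).abs.div_const α).rpow_const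
    (p := 2 * H) (Or.inr (by positivity)))
  rw [abs_of_pos hα, div_self hα.ne', one_rpow] at hlim
  refine hlim.congr' ?_
  filter_upwards [self_mem_nhdsWithin] with p (hp : 1 < p)
  have hp1 : 0 < p - 1 := sub_pos.2 hp
  rw [← div_rpow (abs_nonneg _) (by positivity), abs_div, abs_of_pos hp1, div_div, mul_comm α]

theorem tendsto_incrementVariance_div (hH0 : 0 < H) (hH1 : H < 1) (hα : 0 < α) (h : ℝ) :
    Tendsto (fun p : ℝ => incrementVariance h α H p 1 / (α * (p - 1)) ^ (2 * H))
      (𝓝[>] 1) (𝓝 1) := by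
  have hph : Tendsto (fun p : ℝ => p ^ h) (𝓝[>] 1) (𝓝 1) := by
    simpa using ((continuousAt_rpow_const 1 h (Or.inl one_ne_zero)).tendsto).mono_left
      nhdsWithin_le_nhds
  have hlim := ((hph.mul (tendsto_abs_rpow_sub_one_div_rpow hH0 hα)).add
    (tendsto_sq_rpow_sub_one_div_rpow hH1 hα (h + α * H))).sub
    (hph.mul (tendsto_sq_rpow_sub_one_div_rpow hH1 hα (α * H)))
  rw [mul_one, mul_zero, add_zero, sub_zero] at hlim
  refine hlim.congr fun p => ?_
  simp only [incrementVariance, mul_one, one_rpow]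
  ring

end Asymptotics

theorem stmt8_general {Ω : Type*} [MeasurableSpace Ω] (P : Measure Ω)
    (X Z : ℝ → Ω → ℝ) (H H' σ θ θ' : ℝ)
    (hH : H ∈ Set.Ioo (0:ℝ) 1)
    (hσ : 0 < σ) (hθ : 0 < θ) (hθ' : 0 < θ')
    (hcov : ∀ s t : ℝ, ∫ ω, X t ω * X s ω ∂P =
      σ ^ 2 / 2 * (|t| ^ (2 * H) + |s| ^ (2 * H) - |t - s| ^ (2 * H)))
    (hZ : ∀ t : ℝ, 0 < t → ∀ ω,
      Z t ω = t ^ (H' - (θ / θ') * H) * X (t ^ (θ / θ')) ω)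
    (τ : ℝ) (hτ : 0 < τ) :
    Tendsto (fun t : ℝ =>
        (∫ ω, (Z (t + τ) ω - Z t ω) ^ 2 ∂P) /
          (σ ^ 2 * t ^ (2 * H') * (θ * τ / (θ' * t)) ^ (2 * H)))
      atTop (nhds 1) := by
  set α := θ / θ'
  have hα : 0 < α := div_pos hθ hθ'
  have hp : Tendsto (fun t : ℝ => 1 + τ / t) atTop (𝓝[>] 1) := by
    refine tendsto_nhdsWithin_iff.2 ⟨?_, ?_⟩
    · simpa using ((tendsto_const_nhds (x := τ)).div_atTop tendsto_id).const_add (1 : ℝ)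
    · filter_upwards [eventually_gt_atTop 0] with t ht
      exact lt_add_of_pos_right 1 (div_pos hτ ht)
  refine ((tendsto_incrementVariance_div hH.1 hH.2 hα (H' - α * H)).comp hp).congr' ?_
  filter_upwards [eventually_gt_atTop 0] with t ht
  have hshift : t + τ = t * (1 + τ / t) := by field_simp
  have hexp : H' - α * H + α * H = H' := sub_add_cancel H' (α * H)
  have hscale : incrementVariance (H' - α * H) α H (t * (1 + τ / t)) t =
      t ^ (2 * H') * incrementVariance (H' - α * H) α H (1 + τ / t) 1 := by
    simpa [hexp] using incrementVariance_mul (H' - α * H) α H ht (by positivity) one_pos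
  rw [Function.comp_apply, hshift, integral_sq_sub_of_rpow_timeChange hcov hσ.ne' hH.1 hZ
      (by positivity) ht, hscale, add_sub_cancel_left,
    show θ * τ / (θ' * t) = α * (τ / t) by rw [div_mul_div_comm], ← mul_assoc,
    mul_div_mul_left _ _ (by positivity)]

theorem stmt8 {Ω : Type*} [MeasurableSpace Ω] (P : Measure Ω) [IsProbabilityMeasure P]
    (X Z : ℝ → Ω → ℝ) (H H' σ θ θ' : ℝ)
    (hH : H ∈ Set.Ioo (0:ℝ) 1) (hH' : H' ∈ Set.Ioo (0:ℝ) 1)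
    (hσ : 0 < σ) (hθ : 0 < θ) (hθ' : 0 < θ')
    (hcov : ∀ s t : ℝ, ∫ ω, X t ω * X s ω ∂P =
      σ ^ 2 / 2 * (|t| ^ (2 * H) + |s| ^ (2 * H) - |t - s| ^ (2 * H)))
    (hZ : ∀ t : ℝ, 0 < t → ∀ ω,
      Z t ω = t ^ (H' - (θ / θ') * H) * X (t ^ (θ / θ')) ω)
    (τ : ℝ) (hτ : 0 < τ) :
    Tendsto (fun t : ℝ =>
        (∫ ω, (Z (t + τ) ω - Z t ω) ^ 2 ∂P) /
          (σ ^ 2 * t ^ (2 * H') * (θ * τ / (θ' * t)) ^ (2 * H)))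
      atTop (nhds 1) :=
  stmt8_general P X Z H H' σ θ θ' hH hσ hθ hθ' hcov hZ τ hτ
end

section
/- The function f(t) = cosh(θH t) - 2^{2H-1} |sinh(θt/2)|^{2H} is the autocovariance function of the delampertized standard fBm: if X is a standard fBm with Hurst exponent H and Y_t = e^{-Hθt} X_{e^{θt}}, then E[Y_s Y_t] = f(t-s) for all s,t ∈ ℝ. -/
/-! With `u = e^{θs}`, `v = e^{θt}`, the factor `e^{-Hθ(s+t)} = (uv)^{-H}` turns the diagonal terms
`u^{2H}`, `v^{2H}` of the fBm covariance into `e^{∓Hθ(t-s)}`, whose half-sum is the cosh term, while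
`v - u = 2 e^{θ(s+t)/2} sinh(θ(t-s)/2)` turns the increment term into the sinh term. -/

open MeasureTheory Real

lemma Real.exp_sub_exp_eq_mul_sinh (a b : ℝ) :
    exp a - exp b = 2 * exp ((a + b) / 2) * sinh ((a - b) / 2) := by
  have h_a : exp a = exp ((a + b) / 2) * exp ((a - b) / 2) := by rw [← exp_add]; ring_nf
  have h_b : exp b = exp ((a + b) / 2) * exp (-((a - b) / 2)) := by rw [← exp_add]; ring_nf
  rw [sinh_eq, h_a, h_b]
  ring

lemma Real.abs_exp_rpow (x y : ℝ) : |exp x| ^ y = exp (x * y) := by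
  rw [abs_of_pos (exp_pos x), exp_mul]

lemma fbm_covariance_exp_time (H a b : ℝ) :
    exp (-(H * a)) * exp (-(H * b)) *
        (1 / 2 * (|exp b| ^ (2 * H) + |exp a| ^ (2 * H) - |exp b - exp a| ^ (2 * H))) =
      cosh (H * (b - a)) - 2 ^ (2 * H - 1) * |sinh ((b - a) / 2)| ^ (2 * H) := by
  have h_incr : |exp b - exp a| ^ (2 * H) =
      2 ^ (2 * H) * exp ((a + b) / 2 * (2 * H)) * |sinh ((b - a) / 2)| ^ (2 * H) := by
    rw [exp_sub_exp_eq_mul_sinh, add_comm b a, abs_mul, abs_mul, abs_two,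
      mul_rpow (by positivity) (abs_nonneg _), mul_rpow zero_le_two (abs_nonneg _), abs_exp_rpow]
  rw [abs_exp_rpow, abs_exp_rpow, h_incr, cosh_eq, rpow_sub zero_lt_two, rpow_one]
  have h_pos : exp (-(H * a)) * exp (-(H * b)) * exp (b * (2 * H)) = exp (H * (b - a)) := by
    rw [← exp_add, ← exp_add]; ring_nf
  have h_neg : exp (-(H * a)) * exp (-(H * b)) * exp (a * (2 * H)) = exp (-(H * (b - a))) := by
    rw [← exp_add, ← exp_add]; ring_nf
  have h_mid : exp (-(H * a)) * exp (-(H * b)) * exp ((a + b) / 2 * (2 * H)) = 1 := by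
    rw [← exp_add, ← exp_add, ← exp_zero]; ring_nf
  linear_combination (1 / 2) * h_pos + (1 / 2) * h_neg -
    (2 ^ (2 * H) * |sinh ((b - a) / 2)| ^ (2 * H) / 2) * h_mid

theorem stmt13_general {Ω : Type*} [MeasurableSpace Ω] (P : Measure Ω)
    (X Y : ℝ → Ω → ℝ) (H θ : ℝ)
    (hcov : ∀ s t : ℝ, ∫ ω, X t ω * X s ω ∂P =
      1 / 2 * (|t| ^ (2 * H) + |s| ^ (2 * H) - |t - s| ^ (2 * H)))
    (hY : ∀ t ω, Y t ω = Real.exp (-(H * θ * t)) * X (Real.exp (θ * t)) ω) :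
    ∀ s t : ℝ, ∫ ω, Y s ω * Y t ω ∂P =
      Real.cosh (θ * H * (t - s)) -
        2 ^ (2 * H - 1) * |Real.sinh (θ * (t - s) / 2)| ^ (2 * H) := by
  intro s t
  have h_pull : ∫ ω, Y s ω * Y t ω ∂P = exp (-(H * (θ * s))) * exp (-(H * (θ * t))) *
      ∫ ω, X (exp (θ * t)) ω * X (exp (θ * s)) ω ∂P := by
    simp_rw [hY, ← integral_const_mul, mul_assoc H θ]
    congr 1 with ω
    ring
  rw [h_pull, hcov, fbm_covariance_exp_time, ← mul_sub, mul_comm θ H, mul_assoc, mul_div_assoc]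

theorem stmt13 {Ω : Type*} [MeasurableSpace Ω] (P : Measure Ω) [IsProbabilityMeasure P]
    (X Y : ℝ → Ω → ℝ) (H θ : ℝ) (hH : H ∈ Set.Ioo (0:ℝ) 1) (hθ : 0 < θ)
    (hcov : ∀ s t : ℝ, ∫ ω, X t ω * X s ω ∂P =
      1 / 2 * (|t| ^ (2 * H) + |s| ^ (2 * H) - |t - s| ^ (2 * H)))
    (hY : ∀ t ω, Y t ω = Real.exp (-(H * θ * t)) * X (Real.exp (θ * t)) ω) :
    ∀ s t : ℝ, ∫ ω, Y s ω * Y t ω ∂P =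
      Real.cosh (θ * H * (t - s)) -
        2 ^ (2 * H - 1) * |Real.sinh (θ * (t - s) / 2)| ^ (2 * H) :=
  stmt13_general P X Y H θ hcov hY
end

section
/- Suppose H' = H and the affine log-log relation ln E[M_{2,N,t_a,t_b}(Z)] = ln E[M_{2,1,t_a,t_b}(Z)] - 2H ln N holds asymptotically, so that 2H(ln(θ/θ') + ln(t_b - t_a)) = ln(t_b^{2H} + t_a^{2H} - (t_b t_a)^{H(1-θ/θ')}(t_b^{2Hθ/θ'} + t_a^{2Hθ/θ'} - (t_b^{θ/θ'} - t_a^{θ/θ'})^{2H})) holds for all 0 < t_a < t_b. Then θ' = θ. -/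
/-!
Put `r = θ / θ'`, `t_b = 1` and `t_a = t`, and let `t → 0⁺`. The left side tends to
`2H ln r`. On the right, the bracket `1 + t^{2Hr} - (1 - t^r)^{2H}` is `O(t^r)`, so the
product `t^{H(1-r)} (…)` is `O(t^{H + r(1-H)})` and vanishes since `H < 1`; the right side
thus tends to `ln 1 = 0`. Hence `ln r = 0`, i.e. `θ = θ'`.
-/

open Real Filter Topology Set

lemma one_sub_one_sub_rpow_le {x p : ℝ} (hx0 : 0 ≤ x) (hx1 : x ≤ 1) :
    1 - (1 - x) ^ p ≤ max 1 p * x := by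
  rcases le_total p 1 with hp1 | hp1
  · have : 1 - x ≤ (1 - x) ^ p := self_le_rpow_of_le_one (by linarith) (by linarith) hp1
    rw [max_eq_left hp1]
    linarith
  · have : 1 + p * -x ≤ (1 - x) ^ p := by
      rw [sub_eq_add_neg]; exact one_add_mul_self_le_rpow_one_add (by linarith) hp1
    rw [max_eq_right hp1]
    linarith

lemma tendsto_rpow_nhdsGT_zero {p : ℝ} (hp : 0 < p) :
    Tendsto (fun t : ℝ => t ^ p) (𝓝[>] 0) (𝓝 0) := by
  have h := (continuousAt_rpow_const 0 p (.inr hp.le)).tendsto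
  rw [zero_rpow hp.ne'] at h
  exact h.mono_left nhdsWithin_le_nhds

lemma tendsto_rpow_mul_one_add_rpow_sub_one_sub_rpow {H r : ℝ} (hH : H ∈ Ioo (0 : ℝ) 1)
    (hr : 0 < r) :
    Tendsto (fun t : ℝ => t ^ (H * (1 - r)) * (1 + t ^ (2 * H * r) - (1 - t ^ r) ^ (2 * H)))
      (𝓝[>] 0) (𝓝 0) := by
  obtain ⟨hH0, hH1⟩ := hH
  have hbound : ∀ t ∈ Ioo (0 : ℝ) 1,
      0 ≤ t ^ (H * (1 - r)) * (1 + t ^ (2 * H * r) - (1 - t ^ r) ^ (2 * H)) ∧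
      t ^ (H * (1 - r)) * (1 + t ^ (2 * H * r) - (1 - t ^ r) ^ (2 * H)) ≤
        t ^ (H * (1 - r) + 2 * H * r) + 2 * t ^ (H * (1 - r) + r) := by
    rintro t ⟨ht0, ht1⟩
    have htr0 : 0 < t ^ r := rpow_pos_of_pos ht0 r
    have htr1 : t ^ r < 1 := rpow_lt_one ht0.le ht1 hr
    have h2Hr : 0 < t ^ (2 * H * r) := rpow_pos_of_pos ht0 _
    have hle_one : (1 - t ^ r) ^ (2 * H) ≤ 1 := rpow_le_one (by linarith) (by linarith) (by linarith)
    have hbracket : 1 - (1 - t ^ r) ^ (2 * H) ≤ 2 * t ^ r := by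
      calc 1 - (1 - t ^ r) ^ (2 * H) ≤ max 1 (2 * H) * t ^ r :=
            one_sub_one_sub_rpow_le htr0.le htr1.le
        _ ≤ 2 * t ^ r := by gcongr; exact max_le (by norm_num) (by linarith)
    have hfactor : 0 < t ^ (H * (1 - r)) := rpow_pos_of_pos ht0 _
    refine ⟨mul_nonneg hfactor.le (by linarith), ?_⟩
    calc t ^ (H * (1 - r)) * (1 + t ^ (2 * H * r) - (1 - t ^ r) ^ (2 * H))
        ≤ t ^ (H * (1 - r)) * (t ^ (2 * H * r) + 2 * t ^ r) := by gcongr; linarith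
      _ = t ^ (H * (1 - r) + 2 * H * r) + 2 * t ^ (H * (1 - r) + r) := by
        rw [rpow_add ht0, rpow_add ht0]; ring
  have hupper : Tendsto (fun t : ℝ => t ^ (H * (1 - r) + 2 * H * r) + 2 * t ^ (H * (1 - r) + r))
      (𝓝[>] 0) (𝓝 0) := by
    simpa using (tendsto_rpow_nhdsGT_zero (by nlinarith)).add
      ((tendsto_rpow_nhdsGT_zero (p := H * (1 - r) + r) (by nlinarith)).const_mul 2)
  have hIoo : Ioo (0 : ℝ) 1 ∈ 𝓝[>] (0 : ℝ) := Ioo_mem_nhdsGT one_pos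
  refine squeeze_zero' ?_ ?_ hupper
  · filter_upwards [hIoo] with t ht using (hbound t ht).1
  · filter_upwards [hIoo] with t ht using (hbound t ht).2

theorem stmt18 (H θ θ' : ℝ) (hH : H ∈ Set.Ioo (0:ℝ) 1) (hθ : 0 < θ) (hθ' : 0 < θ')
    (hyp : ∀ t_a t_b : ℝ, 0 < t_a → t_a < t_b →
      2 * H * (Real.log (θ / θ') + Real.log (t_b - t_a)) =
        Real.log (t_b ^ (2 * H) + t_a ^ (2 * H) -
          (t_b * t_a) ^ (H * (1 - θ / θ')) *
            (t_b ^ (2 * H * θ / θ') + t_a ^ (2 * H * θ / θ') -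
              (t_b ^ (θ / θ') - t_a ^ (θ / θ')) ^ (2 * H)))) :
    θ' = θ := by
  set r := θ / θ'
  have hlhs : Tendsto (fun t : ℝ => 2 * H * (log r + log (1 - t))) (𝓝[>] 0)
      (𝓝 (2 * H * log r)) := by
    have : ContinuousAt (fun t : ℝ => 2 * H * (log r + log (1 - t))) 0 := by
      fun_prop (disch := norm_num)
    simpa using this.tendsto.mono_left nhdsWithin_le_nhds
  have hrhs : Tendsto (fun t : ℝ => 2 * H * (log r + log (1 - t))) (𝓝[>] 0) (𝓝 0) := by
    have hinner := ((tendsto_rpow_nhdsGT_zero (p := 2 * H) (by linarith [hH.1])).const_add 1).sub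
      (tendsto_rpow_mul_one_add_rpow_sub_one_sub_rpow hH (div_pos hθ hθ'))
    have hlog := (continuousAt_log one_ne_zero).tendsto.comp (by simpa using hinner)
    rw [log_one] at hlog
    refine hlog.congr' ?_
    filter_upwards [Ioo_mem_nhdsGT one_pos] with t ht
    have h := hyp t 1 ht.1 ht.2
    rw [show 2 * H * θ / θ' = 2 * H * r by ring] at h
    simpa using h.symm
  have hlog : log r = 0 :=
    (mul_eq_zero.mp (tendsto_nhds_unique hlhs hrhs)).resolve_left (by linarith [hH.1])
  have hr1 : θ / θ' = 1 := eq_one_of_pos_of_log_eq_zero (div_pos hθ hθ') hlog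
  exact ((div_eq_one_iff_eq hθ'.ne').mp hr1).symm
end
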